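/- Let R be a commutative ring and let c12, c23, c31 be elements of R, and define c21 = -c12, c32 = -c23, c13 = -c31. Assume that the relation c12 + c23 + c31 = 0 holds. Then for any positive integer d and nonnegative integers a, b, c with a + b + c ≥ 3d - 1, the element c12^a * c23^b * c31^c can be written as φ1 * (c12 * c13)^d + φ2 * (c23 * c21)^d + φ3 * (c31 * c32)^d for some φ1, φ2, φ3 in the subring generated by c12, c23, c31. -/
import Mathlib

private lemma aux_term {A : Type*} [CommRing A] (x y z : A) (I : Ideal A)
    (h : x + y + z = 0) (d : ℕ)
    (hxy : (x * y) ^ d ∈ I) (hyz : (y * z) ^ d ∈ I) (hzx : (z * x) ^ d ∈ I)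
    (a b c : ℕ) (hc : d ≤ c) (habc : 3 * d - 1 ≤ a + b + c) :
    x ^ a * y ^ b * z ^ c ∈ I := by
  set n := c - d with hn
  have hzeq : z = -(x + y) := by linear_combination h
  have key : x ^ a * y ^ b * z ^ c =
      ∑ k ∈ Finset.range (n + 1),
        ((-1 : A) ^ n * (n.choose k : A)) * (x ^ (a + k) * y ^ (b + (n - k)) * z ^ d) := by
    have h1 : x ^ a * y ^ b * z ^ c = (x ^ a * y ^ b * z ^ d) * ((-1 : A) ^ n * (x + y) ^ n) := by
      rw [show c = d + n by omega, pow_add]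
      nth_rewrite 2 [hzeq]
      rw [neg_pow]
      ring
    rw [h1, add_pow]
    simp only [Finset.mul_sum]
    refine Finset.sum_congr rfl fun k _ => ?_
    rw [pow_add, pow_add]
    ring
  rw [key]
  refine Ideal.sum_mem _ fun k hk => ?_
  simp only [Finset.mem_range] at hk
  by_cases hcase : d ≤ a + k
  · have heq : x ^ (a + k) * y ^ (b + (n - k)) * z ^ d =
        (x ^ (a + k - d) * y ^ (b + (n - k))) * (z * x) ^ d := by
      have e1 : x ^ (a + k) = x ^ (a + k - d) * x ^ d := by
        rw [← pow_add]; congr 1; omega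
      rw [e1, mul_pow]; ring
    rw [heq]
    exact Ideal.mul_mem_left _ _ (Ideal.mul_mem_left _ _ hzx)
  · have hcase2 : d ≤ b + (n - k) := by omega
    have e1 : y ^ (b + (n - k)) = y ^ (b + (n - k) - d) * y ^ d := by
      rw [← pow_add]; congr 1; omega
    have heq : x ^ (a + k) * y ^ (b + (n - k)) * z ^ d =
        (x ^ (a + k) * y ^ (b + (n - k) - d)) * (y * z) ^ d := by
      rw [e1, mul_pow]; ring
    rw [heq]
    exact Ideal.mul_mem_left _ _ (Ideal.mul_mem_left _ _ hyz)

private lemma key_span {A : Type*} [CommRing A] (x y z : A)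
    (h : x + y + z = 0) (d : ℕ) (hd : 1 ≤ d) (a b c : ℕ)
    (habc : 3 * d - 1 ≤ a + b + c) :
    x ^ a * y ^ b * z ^ c ∈
      Ideal.span ({(x * -z) ^ d, (y * -x) ^ d, (z * -y) ^ d} : Set A) := by
  set I := Ideal.span ({(x * -z) ^ d, (y * -x) ^ d, (z * -y) ^ d} : Set A) with hI
  have g1 : (x * -z) ^ d ∈ I := Ideal.subset_span (by simp)
  have g2 : (y * -x) ^ d ∈ I := Ideal.subset_span (by simp)
  have g3 : (z * -y) ^ d ∈ I := Ideal.subset_span (by simp)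
  have hzx : (z * x) ^ d ∈ I := by
    have : (z * x) ^ d = (-1 : A) ^ d * (x * -z) ^ d := by
      rw [← mul_pow, show (-1 : A) * (x * -z) = z * x by ring]
    rw [this]; exact Ideal.mul_mem_left _ _ g1
  have hxy : (x * y) ^ d ∈ I := by
    have : (x * y) ^ d = (-1 : A) ^ d * (y * -x) ^ d := by
      rw [← mul_pow, show (-1 : A) * (y * -x) = x * y by ring]
    rw [this]; exact Ideal.mul_mem_left _ _ g2
  have hyz : (y * z) ^ d ∈ I := by
    have : (y * z) ^ d = (-1 : A) ^ d * (z * -y) ^ d := by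
      rw [← mul_pow, show (-1 : A) * (z * -y) = y * z by ring]
    rw [this]; exact Ideal.mul_mem_left _ _ g3
  by_cases h1 : d ≤ c
  · exact aux_term x y z I h d hxy hyz hzx a b c h1 habc
  by_cases h2 : d ≤ a
  · have := aux_term y z x I (by linear_combination h) d hyz hzx hxy b c a h2 (by omega)
    rwa [show y ^ b * z ^ c * x ^ a = x ^ a * y ^ b * z ^ c by ring] at this
  by_cases h3 : d ≤ b
  · have := aux_term z x y I (by linear_combination h) d hzx hxy hyz c a b h3 (by omega)
    rwa [show z ^ c * x ^ a * y ^ b = x ^ a * y ^ b * z ^ c by ring] at this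
  · omega

/-- Combinatorial Lemma 3.1: if `a + b + c ≥ 3d - 1` then
`c12^a * c23^b * c31^c` lies in the span of `(c12*c13)^d, (c23*c21)^d, (c31*c32)^d`
with coefficients in the subring generated by `c12, c23, c31`, where
`c21 = -c12`, `c32 = -c23`, `c13 = -c31`. -/
theorem stmt_0 (R : Type*) [CommRing R] (c12 c23 c31 : R)
    (hsum : c12 + c23 + c31 = 0) (d : ℕ) (hd : 1 ≤ d) (a b c : ℕ)
    (habc : 3 * d - 1 ≤ a + b + c) :
    ∃ φ1 φ2 φ3 : R,
      φ1 ∈ Subring.closure {c12, c23, c31} ∧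
      φ2 ∈ Subring.closure {c12, c23, c31} ∧
      φ3 ∈ Subring.closure {c12, c23, c31} ∧
      c12 ^ a * c23 ^ b * c31 ^ c =
        φ1 * (c12 * (-c31)) ^ d + φ2 * (c23 * (-c12)) ^ d + φ3 * (c31 * (-c23)) ^ d := by
  set S := Subring.closure ({c12, c23, c31} : Set R) with hS
  have hxm : c12 ∈ S := Subring.subset_closure (by simp)
  have hym : c23 ∈ S := Subring.subset_closure (by simp)
  have hzm : c31 ∈ S := Subring.subset_closure (by simp)
  set x : S := ⟨c12, hxm⟩ with hx
  set y : S := ⟨c23, hym⟩ with hy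
  set z : S := ⟨c31, hzm⟩ with hz
  have hsum' : x + y + z = 0 := by
    apply Subtype.ext
    push_cast
    exact hsum
  have mem := key_span x y z hsum' d hd a b c habc
  rw [show ({(x * -z) ^ d, (y * -x) ^ d, (z * -y) ^ d} : Set S) =
      insert ((x * -z) ^ d) (insert ((y * -x) ^ d) {(z * -y) ^ d}) from rfl] at mem
  obtain ⟨φ1, w, hw, hxw⟩ := Submodule.mem_span_insert.mp mem
  obtain ⟨φ2, w2, hw2, hw2eq⟩ := Submodule.mem_span_insert.mp hw
  obtain ⟨φ3, hφ3⟩ := Ideal.mem_span_singleton'.mp hw2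
  refine ⟨φ1, φ2, φ3, φ1.2, φ2.2, φ3.2, ?_⟩
  have hfin : (x : R) ^ a * (y : R) ^ b * (z : R) ^ c =
      ((φ1 • (x * -z) ^ d + (φ2 • (y * -x) ^ d + φ3 * (z * -y) ^ d) : S) : R) := by
    rw [hφ3, ← hw2eq, ← hxw]
    push_cast
    ring
  simp only [smul_eq_mul] at hfin
  push_cast at hfin
  linear_combination hfin
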